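/- arXiv:0712.0632 — 3 statements merged into one kernel-verified Lean document; each statement's English description precedes it below -/
import Mathlib

section
/- Let p be a prime and n ≥ 1. If (c₁, …, c_{n+1}) and (c'₁, …, c'_{n+1}) are two (n+1)-tuples of elements of (ZMod p)ⁿ, each spanning (ZMod p)ⁿ and each summing to 0, then there exists a linear automorphism α of (ZMod p)ⁿ (i.e., α ∈ GL(n, ZMod p)) with α(cᵢ) = c'ᵢ for all i. -/
lemma span_init {p n : ℕ} [Fact p.Prime] (c : Fin (n + 1) → (Fin n → ZMod p))
    (hsum : ∑ i, c i = 0)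
    (hspan : Submodule.span (ZMod p) (Set.range c) = ⊤) :
    ⊤ ≤ Submodule.span (ZMod p) (Set.range (c ∘ Fin.castSucc)) := by
  rw [← hspan]
  apply Submodule.span_le.2
  rintro _ ⟨i, rfl⟩
  rcases Fin.eq_castSucc_or_eq_last i with ⟨j, rfl⟩ | rfl
  · exact Submodule.subset_span ⟨j, rfl⟩
  · have h : c (Fin.last n) = -∑ j : Fin n, c (Fin.castSucc j) := by
      rw [Fin.sum_univ_castSucc] at hsum
      linear_combination (norm := module) hsum
    rw [h]
    exact neg_mem (Submodule.sum_mem _ fun j _ =>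
      Submodule.subset_span ⟨j, rfl⟩)

theorem stmt_1 (p : ℕ) (hp : p.Prime) (n : ℕ) (hn : 1 ≤ n)
    (c c' : Fin (n + 1) → (Fin n → ZMod p))
    (hsum : ∑ i, c i = 0) (hsum' : ∑ i, c' i = 0)
    (hspan : Submodule.span (ZMod p) (Set.range c) = ⊤)
    (hspan' : Submodule.span (ZMod p) (Set.range c') = ⊤) :
    ∃ α : (Fin n → ZMod p) ≃ₗ[ZMod p] (Fin n → ZMod p),
      ∀ i, α (c i) = c' i := by
  haveI : Fact p.Prime := ⟨hp⟩
  have hcard : Fintype.card (Fin n) = Module.finrank (ZMod p) (Fin n → ZMod p) := by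
    simp [Module.finrank_fin_fun]
  set B := basisOfTopLeSpanOfCardEqFinrank (c ∘ Fin.castSucc)
    (span_init c hsum hspan) hcard with hB
  set B' := basisOfTopLeSpanOfCardEqFinrank (c' ∘ Fin.castSucc)
    (span_init c' hsum' hspan') hcard with hB'
  have hBc : ∀ j : Fin n, B j = c (Fin.castSucc j) := fun j => by
    rw [hB, coe_basisOfTopLeSpanOfCardEqFinrank]; rfl
  have hBc' : ∀ j : Fin n, B' j = c' (Fin.castSucc j) := fun j => by
    rw [hB', coe_basisOfTopLeSpanOfCardEqFinrank]; rfl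
  refine ⟨B.equiv B' (Equiv.refl _), fun i => ?_⟩
  rcases Fin.eq_castSucc_or_eq_last i with ⟨j, rfl⟩ | rfl
  · rw [← hBc j, ← hBc' j, Module.Basis.equiv_apply, Equiv.refl_apply]
  · have h : c (Fin.last n) = -∑ j : Fin n, c (Fin.castSucc j) := by
      rw [Fin.sum_univ_castSucc] at hsum
      linear_combination (norm := module) hsum
    have h' : c' (Fin.last n) = -∑ j : Fin n, c' (Fin.castSucc j) := by
      rw [Fin.sum_univ_castSucc] at hsum'
      linear_combination (norm := module) hsum'
    rw [h, h', map_neg, map_sum]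
    congr 1
    apply Finset.sum_congr rfl
    intro j _
    rw [← hBc j, ← hBc' j, Module.Basis.equiv_apply, Equiv.refl_apply]
end

section
/- Let n ≥ 2 and let C be an (n−1) × (n+1) matrix over ℂ such that for every pair of distinct columns, the (n−1) × (n−1) submatrix obtained by deleting those two columns is invertible. Then the null space of C has dimension exactly 2, and every nonzero vector X in the null space of C has at most one zero coordinate. -/
theorem stmt_12 (n : ℕ) (hn : 2 ≤ n)
    (C : Matrix (Fin (n - 1)) (Fin (n + 1)) ℂ)
    (hC : ∀ (j₁ j₂ : Fin (n + 1)), j₁ ≠ j₂ →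
      ∀ e : Fin (n - 1) → Fin (n + 1), Function.Injective e →
        (∀ k, e k ≠ j₁ ∧ e k ≠ j₂) → IsUnit (C.submatrix id e)) :
    Module.finrank ℂ (LinearMap.ker C.mulVecLin) = 2 ∧
    ∀ X : Fin (n + 1) → ℂ, C.mulVec X = 0 → X ≠ 0 →
      ¬ ∃ i j : Fin (n + 1), i ≠ j ∧ X i = 0 ∧ X j = 0 := by
  classical
  have key : ∀ i j : Fin (n + 1), i ≠ j →
      ∃ e : Fin (n - 1) → Fin (n + 1),
        IsUnit (C.submatrix id e) ∧
        (∀ Y : Fin (n - 1) → ℂ, ∃ Z, C.mulVec Z = (C.submatrix id e).mulVec Y) ∧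
        (∀ X : Fin (n + 1) → ℂ, C.mulVec X = 0 → X i = 0 → X j = 0 → X = 0) := by
    intro i j hij
    set s : Finset (Fin (n + 1)) := {i, j}ᶜ with hs
    have hsc : s.card = n - 1 := by
      rw [hs, Finset.card_compl, Finset.card_pair hij, Fintype.card_fin]
      omega
    let eqv : Fin (n - 1) ≃ s := (s.equivFin.trans (finCongr hsc)).symm
    let e : Fin (n - 1) → Fin (n + 1) := fun k => (eqv k : Fin (n + 1))
    have he : Function.Injective e :=
      Subtype.val_injective.comp eqv.injective
    have hee : ∀ k, e k ≠ i ∧ e k ≠ j := by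
      intro k
      have hmem : e k ∉ ({i, j} : Finset (Fin (n + 1))) :=
        Finset.mem_compl.mp (eqv k).2
      constructor
      · intro h; exact hmem (by rw [h]; exact Finset.mem_insert_self _ _)
      · intro h
        exact hmem (by rw [h]; exact Finset.mem_insert_of_mem (Finset.mem_singleton_self _))
    have hM : IsUnit (C.submatrix id e) := hC i j hij e he hee
    -- key sum identity
    have hsum : ∀ X : Fin (n + 1) → ℂ, X i = 0 → X j = 0 →
        (C.submatrix id e).mulVec (X ∘ e) = C.mulVec X := by
      intro X hXi hXj
      funext r
      simp only [Matrix.mulVec, dotProduct, Matrix.submatrix_apply, id_eq,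
        Function.comp_apply]
      have h1 : ∑ k : Fin (n - 1), C r (e k) * X (e k)
          = ∑ x : s, C r (x : Fin (n + 1)) * X (x : Fin (n + 1)) :=
        Equiv.sum_comp eqv (fun x : s => C r (x : Fin (n + 1)) * X (x : Fin (n + 1)))
      rw [h1, Finset.sum_coe_sort s (fun x => C r x * X x)]
      have h2 : ∑ x ∈ ({i, j} : Finset (Fin (n + 1)))ᶜ, C r x * X x
          + ∑ x ∈ ({i, j} : Finset (Fin (n + 1))), C r x * X x
          = ∑ x, C r x * X x := Finset.sum_compl_add_sum _ _
      have h3 : ∑ x ∈ ({i, j} : Finset (Fin (n + 1))), C r x * X x = 0 := by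
        rw [Finset.sum_pair hij, hXi, hXj, mul_zero, mul_zero, add_zero]
      rw [h3, add_zero] at h2
      exact h2
    refine ⟨e, hM, ?_, ?_⟩
    · intro Y
      refine ⟨Function.extend e Y 0, ?_⟩
      have hXi : Function.extend e Y 0 i = 0 := by
        rw [Function.extend_apply']
        · rfl
        · rintro ⟨k, hk⟩; exact (hee k).1 hk
      have hXj : Function.extend e Y 0 j = 0 := by
        rw [Function.extend_apply']
        · rfl
        · rintro ⟨k, hk⟩; exact (hee k).2 hk
      have hcomp : (Function.extend e Y 0) ∘ e = Y := by
        funext k; exact he.extend_apply Y 0 k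
      rw [← hsum _ hXi hXj, hcomp]
    · intro X hX hXi hXj
      have h0 : (C.submatrix id e).mulVec (X ∘ e) = 0 := by
        rw [hsum X hXi hXj, hX]
      have hinj : Function.Injective (C.submatrix id e).mulVec :=
        Matrix.mulVec_injective_iff_isUnit.mpr hM
      have hXe : X ∘ e = 0 := by
        apply hinj
        rw [h0, Matrix.mulVec_zero]
      funext x
      by_cases hxi : x = i
      · rw [hxi]; exact hXi
      by_cases hxj : x = j
      · rw [hxj]; exact hXj
      have hxs : x ∈ s := Finset.mem_compl.mpr (by
        rw [Finset.mem_insert, Finset.mem_singleton]; push_neg; exact ⟨hxi, hxj⟩)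
      have : x = e (eqv.symm ⟨x, hxs⟩) := by
        simp only [e, Equiv.apply_symm_apply]
      rw [this]
      exact congrFun hXe (eqv.symm ⟨x, hxs⟩)
  constructor
  · -- dimension of kernel is 2
    have h01 : (⟨0, by omega⟩ : Fin (n + 1)) ≠ ⟨1, by omega⟩ := by
      intro h; exact absurd (congrArg Fin.val h) (by norm_num)
    obtain ⟨e, hM, hr, -⟩ := key _ _ h01
    have hle : LinearMap.range (C.submatrix id e).mulVecLin ≤ LinearMap.range C.mulVecLin := by
      rintro - ⟨Y, rfl⟩
      obtain ⟨Z, hZ⟩ := hr Y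
      exact ⟨Z, hZ⟩
    have hlower : n - 1 ≤ C.rank := by
      have h1 : (C.submatrix id e).rank = n - 1 := by
        rw [Matrix.rank_of_isUnit _ hM, Fintype.card_fin]
      have h2 : (C.submatrix id e).rank ≤ C.rank := Submodule.finrank_mono hle
      omega
    have hupper : C.rank ≤ n - 1 := by
      simpa using C.rank_le_card_height
    have hrank : Module.finrank ℂ (LinearMap.range C.mulVecLin) = n - 1 :=
      le_antisymm hupper hlower
    have hrn := LinearMap.finrank_range_add_finrank_ker C.mulVecLin
    rw [hrank, Module.finrank_fin_fun] at hrn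
    omega
  · rintro X hX hX0 ⟨i, j, hij, hXi, hXj⟩
    obtain ⟨e, -, -, hzero⟩ := key i j hij
    exact hX0 (hzero X hX hXi hXj)
end

section
/- Let p > 3 be a prime and r ≥ 3 an integer such that p does not divide any of r−1, r, r+1, r+2. Consider the two multisets of elements of ZMod p: M₁ = {1 repeated r−1 times, −(r−1)} and M₂ = {1 repeated r−2 times, 2, −r}. Then there is no unit a of ZMod p such that the multiset {a·x : x ∈ M₁} equals M₂. -/
theorem stmt_16 (p : ℕ) (hp : p.Prime) (hp3 : 3 < p) (r : ℕ) (hr : 3 ≤ r)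
    (h1 : ¬ p ∣ r - 1) (h2 : ¬ p ∣ r) (h3 : ¬ p ∣ r + 1) (h4 : ¬ p ∣ r + 2) :
    ¬ ∃ a : (ZMod p)ˣ,
      Multiset.map (fun x => (a : ZMod p) * x)
          (Multiset.replicate (r - 1) (1 : ZMod p) + {-((r : ZMod p) - 1)}) =
        Multiset.replicate (r - 2) (1 : ZMod p) + {2, -(r : ZMod p)} := by
  haveI := Fact.mk hp
  rintro ⟨a, h⟩
  have hr0 : (r : ZMod p) ≠ 0 := by
    rwa [Ne, ZMod.natCast_eq_zero_iff]
  have hr1 : (r : ZMod p) + 1 ≠ 0 := by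
    have : ((r + 1 : ℕ) : ZMod p) ≠ 0 := by
      rwa [Ne, ZMod.natCast_eq_zero_iff]
    push_cast at this; exact this
  have hr2 : (r : ZMod p) + 2 ≠ 0 := by
    have : ((r + 2 : ℕ) : ZMod p) ≠ 0 := by
      rwa [Ne, ZMod.natCast_eq_zero_iff]
    push_cast at this; exact this
  have ha0 : (a : ZMod p) ≠ 0 := a.ne_zero
  have hne : (a : ZMod p) * -((r : ZMod p) - 1) ≠ a := by
    intro hEq
    apply hr0
    have : (a : ZMod p) * -((r : ZMod p) - 1) = a * 1 := by rw [hEq, mul_one]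
    have := mul_left_cancel₀ ha0 this
    linear_combination -this
  have h12 : (1 : ZMod p) ≠ 2 := by
    intro hEq
    have : (1 : ZMod p) = 0 := by linear_combination -hEq
    exact one_ne_zero this
  have h1r : (1 : ZMod p) ≠ -(r : ZMod p) := by
    intro hEq; exact hr1 (by linear_combination hEq)
  have h2r : (2 : ZMod p) ≠ -(r : ZMod p) := by
    intro hEq; exact hr2 (by linear_combination hEq)
  rw [Multiset.map_add, Multiset.map_replicate, Multiset.map_singleton, mul_one] at h
  have key := congrArg (Multiset.count (a : ZMod p)) h
  rw [Multiset.count_add, Multiset.count_add, Multiset.count_replicate,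
    Multiset.count_replicate, Multiset.count_singleton,
    show ({2, -(r:ZMod p)} : Multiset (ZMod p)) = 2 ::ₘ {-(r:ZMod p)} from rfl,
    Multiset.count_cons, Multiset.count_singleton] at key
  have hne' : ¬ (a : ZMod p) = (a : ZMod p) * -((r : ZMod p) - 1) := fun hh => hne hh.symm
  simp only [if_neg hne', eq_self_iff_true, if_true, add_zero] at key
  by_cases ha1 : (a : ZMod p) = 1
  · rw [if_pos ha1.symm, if_neg (show ¬(a:ZMod p) = 2 by rw [ha1]; exact h12),
      if_neg (show ¬(a:ZMod p) = -(r:ZMod p) by rw [ha1]; exact h1r)] at key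
    omega
  · rw [if_neg (fun hh => ha1 hh.symm)] at key
    by_cases ha2 : (a : ZMod p) = 2
    · rw [if_pos ha2, if_neg (show ¬(a:ZMod p) = -(r:ZMod p) by rw [ha2]; exact h2r)] at key
      omega
    · rw [if_neg ha2] at key
      split at key <;> omega
end
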